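/- arXiv:1910.00744 — 4 statements merged into one kernel-verified Lean document; each statement's English description precedes it below -/
import Mathlib

section
/- Let z : ℝⁿ → ℝ be given by z(x) = Σᵢ₌₁ᵏ aᵢ·ReLU(wᵢ·x + bᵢ) + c, where aᵢ, bᵢ, c ∈ ℝ, wᵢ ∈ ℝⁿ, and ReLU(t) = max(t, 0). Suppose p ∈ ℝⁿ and an index h satisfy: w_h·p + b_h = 0, w_h ≠ 0, a_h ≠ 0, and wᵢ·p + bᵢ ≠ 0 for all i ≠ h. Then z is not differentiable at p. -/
open Matrix

section

variable {E : Type*} [NormedAddCommGroup E] [NormedSpace ℝ E] {φ : E → ℝ} {p : E}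

theorem DifferentiableAt.max_zero_of_ne_zero (hφ : DifferentiableAt ℝ φ p) (hp : φ p ≠ 0) :
    DifferentiableAt ℝ (fun x => max (φ x) 0) p := by
  rcases hp.lt_or_gt with hneg | hpos
  · refine (differentiableAt_const 0).congr_of_eventuallyEq ?_
    filter_upwards [hφ.continuousAt.eventually_lt continuousAt_const hneg] with x hx
    exact max_eq_right hx.le
  · refine hφ.congr_of_eventuallyEq ?_
    filter_upwards [continuousAt_const.eventually_lt hφ.continuousAt hpos] with x hx
    exact max_eq_left hx.le

/-- `max φ 0` has a local minimum and `φ - max φ 0 = min φ 0` a local maximum at a zero of `φ`,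
so if both were differentiable there, their derivatives, which add up to that of `φ`, would vanish. -/
theorem not_differentiableAt_max_zero_of_fderiv_ne_zero (hφ : DifferentiableAt ℝ φ p)
    (hp : φ p = 0) (hφ' : fderiv ℝ φ p ≠ 0) :
    ¬ DifferentiableAt ℝ (fun x => max (φ x) 0) p := by
  intro hmax
  set m := fun x => max (φ x) 0
  have hmin : IsLocalMin m p := .of_forall fun x => by simp [m, hp]
  have hmax' : IsLocalMax (fun x => φ x - m x) p := .of_forall fun x => by simp [m, hp]
  have hsplit : fderiv ℝ φ p = fderiv ℝ (fun x => φ x - m x) p + fderiv ℝ m p := by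
    rw [fderiv_fun_sub hφ hmax, sub_add_cancel]
  exact hφ' (by rw [hsplit, hmin.fderiv_eq_zero, hmax'.fderiv_eq_zero, add_zero])

end

theorem differentiableAt_sum_iff_of_ne {𝕜 E F ι : Type*} [NontriviallyNormedField 𝕜]
    [NormedAddCommGroup E] [NormedSpace 𝕜 E] [NormedAddCommGroup F] [NormedSpace 𝕜 F]
    [Fintype ι] [DecidableEq ι] {f : ι → E → F} {x : E} {j : ι}
    (hf : ∀ i ≠ j, DifferentiableAt 𝕜 (f i) x) :
    DifferentiableAt 𝕜 (fun y => ∑ i, f i y) x ↔ DifferentiableAt 𝕜 (f j) x := by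
  have hrest : DifferentiableAt 𝕜 (fun y => ∑ i ∈ Finset.univ.erase j, f i y) x :=
    .fun_sum fun i hi => hf i (Finset.ne_of_mem_erase hi)
  simp_rw [← Finset.add_sum_erase _ _ (Finset.mem_univ j)]
  exact hrest.fun_add_iff_left

theorem hasFDerivAt_dotProduct_add {n : Type*} [Fintype n] (w : n → ℝ) (b : ℝ) (p : n → ℝ) :
    HasFDerivAt (fun x => w ⬝ᵥ x + b) (dotProductBilin ℝ ℝ w).toContinuousLinearMap p :=
  ((dotProductBilin ℝ ℝ w).toContinuousLinearMap.hasFDerivAt).add_const b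

theorem not_differentiableAt_max_dotProduct_add_zero {n : Type*} [Fintype n] {w : n → ℝ}
    {b : ℝ} {p : n → ℝ} (hw : w ≠ 0) (hp : w ⬝ᵥ p + b = 0) :
    ¬ DifferentiableAt ℝ (fun x => max (w ⬝ᵥ x + b) 0) p := by
  have hφ := hasFDerivAt_dotProduct_add w b p
  refine not_differentiableAt_max_zero_of_fderiv_ne_zero hφ.differentiableAt hp ?_
  rw [hφ.fderiv]
  intro h0
  exact hw (dotProduct_eq_zero w fun v => by simpa using congr($h0 v))

/-- At a generic boundary point (lying on exactly one boundary hyperplane, with nonzero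
incoming weight vector and nonzero outgoing weight for that neuron), a one-hidden-layer
ReLU network with scalar output fails to be differentiable. -/
theorem relu_network_not_differentiable_on_boundary
    (n k : ℕ) (a : Fin k → ℝ) (w : Fin k → Fin n → ℝ) (b : Fin k → ℝ) (c : ℝ)
    (z : (Fin n → ℝ) → ℝ)
    (hz : ∀ x, z x = (∑ i, a i * max (dotProduct (w i) x + b i) 0) + c)
    (p : Fin n → ℝ) (h : Fin k)
    (hzero : dotProduct (w h) p + b h = 0)
    (hwh : w h ≠ 0) (hah : a h ≠ 0)
    (hother : ∀ i, i ≠ h → dotProduct (w i) p + b i ≠ 0) :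
    ¬ DifferentiableAt ℝ z p := by
  intro hdz
  have hsum : DifferentiableAt ℝ (fun x => ∑ i, a i * max (w i ⬝ᵥ x + b i) 0) p := by
    simpa [funext hz] using hdz.sub_const c
  have hneuron : DifferentiableAt ℝ (fun x => a h * max (w h ⬝ᵥ x + b h) 0) p :=
    (differentiableAt_sum_iff_of_ne fun i hi =>
      (((hasFDerivAt_dotProduct_add (w i) (b i) p).differentiableAt.max_zero_of_ne_zero
        (hother i hi)).const_mul (a i))).1 hsum
  refine not_differentiableAt_max_dotProduct_add_zero hwh hzero ?_
  simpa [hah] using hneuron.const_mul (a h)⁻¹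
end

section
/- Let w, w' ∈ ℝⁿ and b, b' ∈ ℝ, with w ≠ 0. If ReLU(w·x + b) = ReLU(w'·x + b') for all x ∈ ℝⁿ, where ReLU(t) = max(t, 0), then w' = w and b' = b. -/
/-!
On the ray `t ↦ x + t • w` the first neuron's preactivation `w ⬝ᵥ x + b + t (w ⬝ᵥ w)` is eventually
positive, and wherever `max u 0 = max v 0` with `v > 0` we get `u = v`. So the two preactivations,
both affine in `t`, agree at two points of the ray, hence at `t = 0`: the affine maps
`x ↦ w ⬝ᵥ x + b` and `x ↦ w' ⬝ᵥ x + b'` coincide, which pins down the weights and the bias.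
-/

open Matrix

lemma eq_of_max_zero_eq_of_pos {α : Type*} [LinearOrder α] [Zero α] {u v : α}
    (h : max u 0 = max v 0) (hv : 0 < v) : u = v := by
  rw [max_eq_left hv.le] at h
  rcases le_total u 0 with hu | hu
  · rw [max_eq_right hu] at h
    exact absurd h hv.ne
  · rwa [max_eq_left hu] at h

section OrderedField

variable {𝕜 : Type*} [Field 𝕜] [LinearOrder 𝕜] [IsStrictOrderedRing 𝕜]

lemma eq_of_max_zero_eq_on_line {a c a' c' : 𝕜} (hc : 0 < c)
    (h : ∀ t, max (a + t * c) 0 = max (a' + t * c') 0) : a' = a ∧ c' = c := by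
  set t := (1 - a) / c
  have ht : a + t * c = 1 := by rw [div_mul_cancel₀ _ hc.ne']; ring
  have h₀ := eq_of_max_zero_eq_of_pos (h t).symm (by rw [ht]; exact one_pos)
  have h₁ := eq_of_max_zero_eq_of_pos (h (t + 1)).symm (by linarith)
  have hc' : c' = c := by linarith
  subst hc'
  exact ⟨by linarith, rfl⟩

lemma dotProduct_self_pos {ι : Type*} [Fintype ι] {w : ι → 𝕜} (hw : w ≠ 0) : 0 < w ⬝ᵥ w :=
  (Finset.sum_nonneg fun i _ => mul_self_nonneg (w i)).lt_of_ne
    (Ne.symm (dotProduct_self_eq_zero.not.mpr hw))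

lemma affine_eq_of_max_zero_eq {ι : Type*} [Fintype ι] {w w' : ι → 𝕜} {b b' : 𝕜} (hw : w ≠ 0)
    (h : ∀ x, max (w ⬝ᵥ x + b) 0 = max (w' ⬝ᵥ x + b') 0) (x : ι → 𝕜) :
    w' ⬝ᵥ x + b' = w ⬝ᵥ x + b := by
  refine (eq_of_max_zero_eq_on_line (c' := w' ⬝ᵥ w) (dotProduct_self_pos hw) fun t => ?_).1
  simpa only [dotProduct_add, dotProduct_smul, smul_eq_mul, add_right_comm] using h (x + t • w)

end OrderedField

/-- A single ReLU neuron with nonzero weight vector is uniquely identifiable from the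
function it computes. -/
theorem relu_neuron_identifiable
    (n : ℕ) (w w' : Fin n → ℝ) (b b' : ℝ) (hw : w ≠ 0)
    (h : ∀ x : Fin n → ℝ, max (dotProduct w x + b) 0 = max (dotProduct w' x + b') 0) :
    w' = w ∧ b' = b := by
  have haffine := affine_eq_of_max_zero_eq hw h
  have hb : b' = b := by simpa using haffine 0
  refine ⟨dotProduct_eq w' w fun x => ?_, hb⟩
  linarith [haffine x]
end

section
/- Let w₁,…,w_k ∈ ℝⁿ, b ∈ ℝᵏ, c ∈ ℝ, and for a weight vector a ∈ ℝᵏ define preact_a(x) = Σᵢ₌₁ᵏ aᵢ·ReLU(wᵢ·x + bᵢ) + c, where ReLU(t) = max(t, 0). Fix an index h and let a, a' ∈ ℝᵏ satisfy aᵢ = a'ᵢ for all i ≠ h. Suppose that for every x ∈ ℝⁿ with w_h·x + b_h > 0 we have preact_a(x) ≤ 0 and preact_{a'}(x) ≤ 0. Then ReLU(preact_a(x)) = ReLU(preact_{a'}(x)) for all x ∈ ℝⁿ. -/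
open Matrix

/-- An additional isomorphism of ReLU networks: if whenever the `h`-th first-layer neuron is
active the second-layer neuron is inactive (for both weight vectors `a` and `a'`, which agree
except in coordinate `h`), then the post-activation output of the second-layer neuron is the
same for `a` and `a'`. -/
theorem weight_not_identifiable
    (n k : ℕ) (w : Fin k → Fin n → ℝ) (b : Fin k → ℝ) (c : ℝ)
    (preact : (Fin k → ℝ) → (Fin n → ℝ) → ℝ)
    (hpreact : ∀ a x, preact a x = (∑ i, a i * max (dotProduct (w i) x + b i) 0) + c)
    (h : Fin k) (a a' : Fin k → ℝ)
    (ha : ∀ i, i ≠ h → a i = a' i)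
    (hneg : ∀ x : Fin n → ℝ, 0 < dotProduct (w h) x + b h →
      preact a x ≤ 0 ∧ preact a' x ≤ 0) :
    ∀ x : Fin n → ℝ, max (preact a x) 0 = max (preact a' x) 0 := by
  intro x
  by_cases hx : 0 < dotProduct (w h) x + b h
  · obtain ⟨h1, h2⟩ := hneg x hx
    rw [max_eq_right h1, max_eq_right h2]
  · have hm : max (dotProduct (w h) x + b h) 0 = 0 := max_eq_right (le_of_not_gt hx)
    have : preact a x = preact a' x := by
      rw [hpreact, hpreact]
      congr 1
      apply Finset.sum_congr rfl
      intro i _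
      by_cases hi : i = h
      · subst hi; rw [hm]; ring
      · rw [ha i hi]
    rw [this]
end

section
/- Let z : ℝⁿ → ℝ be given by z(x) = Σᵢ₌₁ᵏ aᵢ·ReLU(wᵢ·x + bᵢ) + c, where aᵢ, bᵢ, c ∈ ℝ, wᵢ ∈ ℝⁿ, and ReLU(t) = max(t, 0). Fix an index h, and let p₁, p₂ ∈ ℝⁿ satisfy: for every i ≠ h, either (wᵢ·p₁ + bᵢ > 0 and wᵢ·p₂ + bᵢ > 0) or (wᵢ·p₁ + bᵢ < 0 and wᵢ·p₂ + bᵢ < 0); and w_h·p₁ + b_h < 0 while w_h·p₂ + b_h > 0. Then z is differentiable at p₁ and p₂, and the difference of derivatives Dz(p₂) − Dz(p₁) is the linear functional v ↦ a_h·(w_h·v). -/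
open Matrix

/-!
Off the hyperplanes `w i ⬝ᵥ x + b i = 0`, the network is locally affine and its derivative is
`∑ a i • (w i ⬝ᵥ ·)` over the active neurons `i`. Going from `p₁` to `p₂` switches on neuron `h`
and no other, so the two derivatives differ by exactly `a h • (w h ⬝ᵥ ·)`.
-/

theorem HasFDerivAt.max_zero {E : Type*} [NormedAddCommGroup E] [NormedSpace ℝ E]
    {f : E → ℝ} {f' : StrongDual ℝ E} {p : E} (hf : HasFDerivAt f f' p) (hp : f p ≠ 0) :
    HasFDerivAt (fun x => max (f x) 0) (if 0 < f p then f' else 0) p := by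
  rcases hp.lt_or_gt with hneg | hpos
  · rw [if_neg hneg.not_gt]
    have hzero : (fun x => max (f x) 0) =ᶠ[nhds p] fun _ => 0 := by
      filter_upwards [hf.continuousAt.eventually_lt continuousAt_const hneg] with x hx
      exact max_eq_right hx.le
    exact (hasFDerivAt_const 0 p).congr_of_eventuallyEq hzero
  · rw [if_pos hpos]
    have hid : (fun x => max (f x) 0) =ᶠ[nhds p] f := by
      filter_upwards [continuousAt_const.eventually_lt hf.continuousAt hpos] with x hx
      exact max_eq_left hx.le
    exact hf.congr_of_eventuallyEq hid

theorem hasFDerivAt_sum_mul_max_zero_add {E ι : Type*} [NormedAddCommGroup E]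
    [NormedSpace ℝ E] [Fintype ι] (a : ι → ℝ) (ℓ : ι → StrongDual ℝ E) (b : ι → ℝ) (c : ℝ)
    {p : E} (hp : ∀ i, ℓ i p + b i ≠ 0) :
    HasFDerivAt (fun x => (∑ i, a i * max (ℓ i x + b i) 0) + c)
      (∑ i, if 0 < ℓ i p + b i then a i • ℓ i else 0) p := by
  have hterm (i : ι) : HasFDerivAt (fun x => a i * max (ℓ i x + b i) 0)
      (if 0 < ℓ i p + b i then a i • ℓ i else 0) p := by
    refine (((ℓ i).hasFDerivAt.add_const (b i)).max_zero (hp i)).const_mul (a i) |>.congr_fderiv ?_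
    split_ifs <;> simp
  exact (HasFDerivAt.fun_sum fun i _ => hterm i).add_const c

theorem Fintype.sum_ite_sub_sum_ite_of_iff_of_ne {ι M : Type*} [Fintype ι] [AddCommGroup M]
    (P Q : ι → Prop) [DecidablePred P] [DecidablePred Q] (f : ι → M) (j : ι)
    (hPQ : ∀ i, i ≠ j → (P i ↔ Q i)) (hP : P j) (hQ : ¬Q j) :
    (∑ i, if P i then f i else 0) - (∑ i, if Q i then f i else 0) = f j := by
  rw [← Finset.sum_sub_distrib, Fintype.sum_eq_single j]
  · simp [hP, hQ]
  · intro i hi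
    simp [hPQ i hi]

/-- The weight-recovery identity: evaluating a second-layer preactivation on the two sides of
the boundary hyperplane of first-layer neuron `h` (with all other activation signs fixed), the
derivative jumps by exactly `v ↦ a_h·(w_h·v)`. -/
theorem gradient_jump_across_boundary
    (n k : ℕ) (a : Fin k → ℝ) (w : Fin k → Fin n → ℝ) (b : Fin k → ℝ) (c : ℝ)
    (z : (Fin n → ℝ) → ℝ)
    (hz : ∀ x, z x = (∑ i, a i * max (dotProduct (w i) x + b i) 0) + c)
    (h : Fin k) (p₁ p₂ : Fin n → ℝ)
    (hsame : ∀ i, i ≠ h →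
      (0 < dotProduct (w i) p₁ + b i ∧ 0 < dotProduct (w i) p₂ + b i) ∨
      (dotProduct (w i) p₁ + b i < 0 ∧ dotProduct (w i) p₂ + b i < 0))
    (h1 : dotProduct (w h) p₁ + b h < 0)
    (h2 : 0 < dotProduct (w h) p₂ + b h) :
    DifferentiableAt ℝ z p₁ ∧ DifferentiableAt ℝ z p₂ ∧
      ∀ v : Fin n → ℝ,
        fderiv ℝ z p₂ v - fderiv ℝ z p₁ v = a h * dotProduct (w h) v := by
  let ℓ i : StrongDual ℝ (Fin n → ℝ) :=
    LinearMap.toContinuousLinearMap (dotProductBilin ℝ ℝ (w i))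
  have hderiv (p : Fin n → ℝ) (hp : ∀ i, dotProduct (w i) p + b i ≠ 0) : HasFDerivAt z
      (∑ i, if 0 < dotProduct (w i) p + b i then a i • ℓ i else 0) p :=
    funext hz ▸ hasFDerivAt_sum_mul_max_zero_add a ℓ b c hp
  have hrest (i : Fin k) (hi : i ≠ h) : dotProduct (w i) p₁ + b i ≠ 0 ∧
      dotProduct (w i) p₂ + b i ≠ 0 ∧
      (0 < dotProduct (w i) p₂ + b i ↔ 0 < dotProduct (w i) p₁ + b i) := by
    rcases hsame i hi with ⟨hpos₁, hpos₂⟩ | ⟨hneg₁, hneg₂⟩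
    · exact ⟨hpos₁.ne', hpos₂.ne', iff_of_true hpos₂ hpos₁⟩
    · exact ⟨hneg₁.ne, hneg₂.ne, iff_of_false hneg₂.not_gt hneg₁.not_gt⟩
  have hd₁ := hderiv p₁ fun i => by
    rcases eq_or_ne i h with rfl | hi
    exacts [h1.ne, (hrest i hi).1]
  have hd₂ := hderiv p₂ fun i => by
    rcases eq_or_ne i h with rfl | hi
    exacts [h2.ne', (hrest i hi).2.1]
  refine ⟨hd₁.differentiableAt, hd₂.differentiableAt, fun v => ?_⟩
  have hjump := Fintype.sum_ite_sub_sum_ite_of_iff_of_ne _ _ (fun i => a i • ℓ i) h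
    (fun i hi => (hrest i hi).2.2) h2 h1.not_gt
  rw [hd₁.fderiv, hd₂.fderiv, ← _root_.sub_apply, hjump]
  rfl
end
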